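/- Assume p = 2 and S is a quasi-thin association scheme (k_i ≤ 2 for all i). If S equals the complex product O^ϑ(S)O_ϑ(S), then S is a 2-transitive scheme. -/
import Mathlib


open scoped Classical

/-- An association scheme of class `d` on a nonempty finite set `X`:
a partition of `X × X` into nonempty relations `r 0, …, r d` with
`r 0` the diagonal, closed under converse (`star`), and with
intersection numbers `pNum i j k`. -/
structure AssocScheme (X : Type*) [Fintype X] [Nonempty X] (d : ℕ) where
  r : Fin (d + 1) → Set (X × X)
  r_nonempty : ∀ i, (r i).Nonempty
  existsUnique_rel : ∀ q : X × X, ∃! i, q ∈ r i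
  r_zero : r 0 = {q : X × X | q.1 = q.2}
  star : Fin (d + 1) → Fin (d + 1)
  mem_star : ∀ (i : Fin (d + 1)) (q : X × X), q ∈ r (star i) ↔ (q.2, q.1) ∈ r i
  pNum : Fin (d + 1) → Fin (d + 1) → Fin (d + 1) → ℕ
  ncard_eq : ∀ (i j k : Fin (d + 1)), ∀ q ∈ r k,
    {z : X | (q.1, z) ∈ r i ∧ (z, q.2) ∈ r j}.ncard = pNum i j k

namespace AssocScheme

variable {X : Type*} [Fintype X] [Nonempty X] {d : ℕ}

/-- The valency `k_i = p_{i i*}^0` of the relation `R_i`. -/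
def val (S : AssocScheme X d) (i : Fin (d + 1)) : ℕ := S.pNum i (S.star i) 0

/-- The complex product `UV = {R_k : p_{uv}^k > 0 for some R_u ∈ U, R_v ∈ V}`. -/
def cmul (S : AssocScheme X d) (U V : Set (Fin (d + 1))) : Set (Fin (d + 1)) :=
  {k | ∃ u ∈ U, ∃ v ∈ V, 0 < S.pNum u v k}

/-- A nonempty subset `T` is closed if `T*T ⊆ T`. -/
def IsClosedSubset (S : AssocScheme X d) (T : Set (Fin (d + 1))) : Prop :=
  T.Nonempty ∧ S.cmul (S.star '' T) T ⊆ T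

/-- The thin radical `O_ϑ(S) = {R_i : k_i = 1}`. -/
def thinRadical (S : AssocScheme X d) : Set (Fin (d + 1)) := {i | S.val i = 1}

/-- A closed subset `T` is strongly normal if `R_{i*} T R_i ⊆ T` for all `i`. -/
def IsStronglyNormal (S : AssocScheme X d) (T : Set (Fin (d + 1))) : Prop :=
  S.IsClosedSubset T ∧ ∀ i : Fin (d + 1), S.cmul (S.cmul {S.star i} T) {i} ⊆ T

/-- The thin residue `O^ϑ(S)`: the intersection of all strongly normal closed subsets. -/
def thinResidue (S : AssocScheme X d) : Set (Fin (d + 1)) :=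
  ⋂₀ {T | S.IsStronglyNormal T}

/-- `⟨H⟩`: the intersection of all closed subsets containing `H`. -/
def closure (S : AssocScheme X d) (H : Set (Fin (d + 1))) : Set (Fin (d + 1)) :=
  ⋂₀ {T | S.IsClosedSubset T ∧ H ⊆ T}

/-- The adjacency matrix `A̅_i` of `R_i`, with entries in `𝔽`. -/
noncomputable def adj (S : AssocScheme X d) (𝔽 : Type*) [Field 𝔽] (i : Fin (d + 1)) :
    Matrix X X 𝔽 :=
  Matrix.of fun x y => if (x, y) ∈ S.r i then 1 else 0

/-- `v` spans a trivial `𝔽S`-submodule of the regular `𝔽S`-module: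
`v` is a nonzero element of `𝔽S` with `A̅_i v = k̅_i v` for all `i`. -/
def IsTrivialVector (S : AssocScheme X d) (𝔽 : Type*) [Field 𝔽] (v : Matrix X X 𝔽) : Prop :=
  v ≠ 0 ∧ v ∈ Submodule.span 𝔽 (Set.range (S.adj 𝔽)) ∧
    ∀ i : Fin (d + 1), S.adj 𝔽 i * v = (S.val i : 𝔽) • v

/-- `S` is `p`-transitive over `𝔽` (of characteristic `p`) if the regular `𝔽S`-module
contains a unique trivial `𝔽S`-submodule. -/
def IsPTransitive (S : AssocScheme X d) (𝔽 : Type*) [Field 𝔽] : Prop :=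
  ∃! W : Submodule 𝔽 (Matrix X X 𝔽),
    ∃ v : Matrix X X 𝔽, S.IsTrivialVector 𝔽 v ∧ W = Submodule.span 𝔽 {v}

/-- A subset `T ⊆ S` is singular if `O_ϑ(S) ⊆ T` and
`R_x R_{y*} R_y R_z ⊆ T` for all `R_x ∈ O_ϑ(S)`, `R_y ∈ S`, `R_z ∈ T`. -/
def IsSingular (S : AssocScheme X d) (T : Set (Fin (d + 1))) : Prop :=
  S.thinRadical ⊆ T ∧ ∀ x ∈ S.thinRadical, ∀ y : Fin (d + 1), ∀ z ∈ T,
    S.cmul (S.cmul (S.cmul {x} {S.star y}) {y}) {z} ⊆ T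

/-- `S_{p'} = {R_i ∈ S : p ∤ k_i}`. -/
def pPrimePart (S : AssocScheme X d) (p : ℕ) : Set (Fin (d + 1)) :=
  {i | ¬ p ∣ S.val i}

end AssocScheme

namespace AssocScheme

variable {X : Type*} [Fintype X] [Nonempty X] {d : ℕ} (S : AssocScheme X d)

/-- The (unique) relation index containing a pair. -/
noncomputable def rell (q : X × X) : Fin (d + 1) :=
  (S.existsUnique_rel q).choose

lemma mem_rell (q : X × X) : q ∈ S.r (S.rell q) :=
  (S.existsUnique_rel q).choose_spec.1

lemma eq_of_mem {q : X × X} {i j : Fin (d + 1)} (hi : q ∈ S.r i) (hj : q ∈ S.r j) : i = j := by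
  obtain ⟨k, -, hu⟩ := S.existsUnique_rel q
  rw [hu i hi, hu j hj]

lemma rell_eq {q : X × X} {i : Fin (d + 1)} (h : q ∈ S.r i) : S.rell q = i :=
  S.eq_of_mem (S.mem_rell q) h

lemma mem_diag (x : X) : ((x, x) : X × X) ∈ S.r 0 := by
  rw [S.r_zero]; exact rfl

lemma eq_of_mem_zero {x y : X} (h : ((x, y) : X × X) ∈ S.r 0) : x = y := by
  rw [S.r_zero] at h; exact h

lemma pos_of_chain {i j k : Fin (d + 1)} {x z y : X}
    (h1 : (x, z) ∈ S.r i) (h2 : (z, y) ∈ S.r j) (h3 : (x, y) ∈ S.r k) :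
    0 < S.pNum i j k := by
  rw [← S.ncard_eq i j k (x, y) h3]
  exact (Set.ncard_pos (Set.toFinite _)).mpr ⟨z, h1, h2⟩

lemma chain_of_pos {i j k : Fin (d + 1)} {x y : X}
    (hp : 0 < S.pNum i j k) (hk : (x, y) ∈ S.r k) :
    ∃ z, (x, z) ∈ S.r i ∧ (z, y) ∈ S.r j := by
  rw [← S.ncard_eq i j k (x, y) hk] at hp
  obtain ⟨z, hz⟩ := (Set.ncard_pos (Set.toFinite _)).mp hp
  exact ⟨z, hz.1, hz.2⟩

lemma exists_pair (k : Fin (d + 1)) : ∃ x y, ((x, y) : X × X) ∈ S.r k := by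
  obtain ⟨q, hq⟩ := S.r_nonempty k
  exact ⟨q.1, q.2, by rwa [Prod.mk.eta]⟩

lemma mem_star' {i : Fin (d + 1)} {x y : X} :
    ((x, y) : X × X) ∈ S.r (S.star i) ↔ ((y, x) : X × X) ∈ S.r i :=
  S.mem_star i (x, y)

lemma star_star (i : Fin (d + 1)) : S.star (S.star i) = i := by
  obtain ⟨x, y, hq⟩ := S.exists_pair i
  have h1 : ((y, x) : X × X) ∈ S.r (S.star i) := S.mem_star'.mpr hq
  have h2 : ((x, y) : X × X) ∈ S.r (S.star (S.star i)) := S.mem_star'.mpr h1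
  exact S.eq_of_mem h2 hq

lemma star_zero : S.star (0 : Fin (d + 1)) = 0 := by
  obtain ⟨x⟩ := (inferInstance : Nonempty X)
  exact S.eq_of_mem (S.mem_star'.mpr (S.mem_diag x)) (S.mem_diag x)

lemma val_pos (i : Fin (d + 1)) : 0 < S.val i := by
  obtain ⟨x, y, hq⟩ := S.exists_pair i
  exact S.pos_of_chain hq (S.mem_star'.mpr hq) (S.mem_diag x)

lemma exists_out (x : X) (i : Fin (d + 1)) : ∃ z, ((x, z) : X × X) ∈ S.r i := by
  obtain ⟨z, hz, -⟩ := S.chain_of_pos (S.val_pos i) (S.mem_diag x)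
  exact ⟨z, hz⟩

lemma pos_rot {i j k : Fin (d + 1)} (h : 0 < S.pNum i j k) :
    0 < S.pNum (S.star i) k j := by
  obtain ⟨x, y, hq⟩ := S.exists_pair k
  obtain ⟨z, h1, h2⟩ := S.chain_of_pos h hq
  exact S.pos_of_chain (S.mem_star'.mpr h1) hq h2

lemma pos_rot2 {i j k : Fin (d + 1)} (h : 0 < S.pNum i j k) :
    0 < S.pNum k (S.star j) i := by
  obtain ⟨x, y, hq⟩ := S.exists_pair k
  obtain ⟨z, h1, h2⟩ := S.chain_of_pos h hq
  exact S.pos_of_chain hq (S.mem_star'.mpr h2) h1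

lemma pos_star {i j k : Fin (d + 1)} (h : 0 < S.pNum i j k) :
    0 < S.pNum (S.star j) (S.star i) (S.star k) := by
  obtain ⟨x, y, hq⟩ := S.exists_pair k
  obtain ⟨z, h1, h2⟩ := S.chain_of_pos h hq
  exact S.pos_of_chain (S.mem_star'.mpr h2) (S.mem_star'.mpr h1) (S.mem_star'.mpr hq)

lemma pos_right_zero (i : Fin (d + 1)) : 0 < S.pNum i 0 i := by
  obtain ⟨x, y, hq⟩ := S.exists_pair i
  exact S.pos_of_chain hq (S.mem_diag y) hq

lemma pos_left_zero (i : Fin (d + 1)) : 0 < S.pNum 0 i i := by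
  obtain ⟨x, y, hq⟩ := S.exists_pair i
  exact S.pos_of_chain (S.mem_diag x) hq hq

lemma eq_right_zero {i k : Fin (d + 1)} (h : 0 < S.pNum i 0 k) : k = i := by
  obtain ⟨x, y, hq⟩ := S.exists_pair k
  obtain ⟨z, h1, h2⟩ := S.chain_of_pos h hq
  have := S.eq_of_mem_zero h2
  subst this
  exact S.eq_of_mem hq h1

lemma eq_left_zero {i k : Fin (d + 1)} (h : 0 < S.pNum 0 i k) : k = i := by
  obtain ⟨x, y, hq⟩ := S.exists_pair k
  obtain ⟨z, h1, h2⟩ := S.chain_of_pos h hq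
  have := S.eq_of_mem_zero h1
  subst this
  exact S.eq_of_mem hq h2

lemma assoc1 {a b m c k : Fin (d + 1)} (h1 : 0 < S.pNum a b m) (h2 : 0 < S.pNum m c k) :
    ∃ n, 0 < S.pNum b c n ∧ 0 < S.pNum a n k := by
  obtain ⟨x, y, hq⟩ := S.exists_pair k
  obtain ⟨z, hz1, hz2⟩ := S.chain_of_pos h2 hq
  obtain ⟨w, hw1, hw2⟩ := S.chain_of_pos h1 hz1
  exact ⟨S.rell (w, y), S.pos_of_chain hw2 hz2 (S.mem_rell _),
    S.pos_of_chain hw1 (S.mem_rell _) hq⟩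

lemma assoc2 {a b c m k : Fin (d + 1)} (h1 : 0 < S.pNum b c m) (h2 : 0 < S.pNum a m k) :
    ∃ n, 0 < S.pNum a b n ∧ 0 < S.pNum n c k := by
  obtain ⟨x, y, hq⟩ := S.exists_pair k
  obtain ⟨z, hz1, hz2⟩ := S.chain_of_pos h2 hq
  obtain ⟨w, hw1, hw2⟩ := S.chain_of_pos h1 hz2
  exact ⟨S.rell (x, w), S.pos_of_chain hz1 hw1 (S.mem_rell _),
    S.pos_of_chain (S.mem_rell _) hw2 hq⟩

end AssocScheme
namespace AssocScheme

variable {X : Type*} [Fintype X] [Nonempty X] {d : ℕ} (S : AssocScheme X d)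

lemma card_out (j : Fin (d + 1)) (x : X) :
    (Finset.univ.filter fun z => ((x, z) : X × X) ∈ S.r j).card = S.val j := by
  have h0 := S.mem_diag x
  have key := S.ncard_eq j (S.star j) 0 (x, x) h0
  have hset : {z : X | ((x, x).1, z) ∈ S.r j ∧ (z, (x, x).2) ∈ S.r (S.star j)}
      = {z : X | ((x, z) : X × X) ∈ S.r j} := by
    ext z
    simp only [Set.mem_setOf_eq, and_iff_left_iff_imp]
    intro hz
    exact S.mem_star'.mpr hz
  rw [hset] at key
  rw [show S.val j = S.pNum j (S.star j) 0 from rfl, ← key,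
    Set.ncard_eq_toFinset_card']
  congr 1
  ext z
  simp

lemma sum_pNum (j k : Fin (d + 1)) : ∑ i, S.pNum j i k = S.val j := by
  obtain ⟨x, y, hq⟩ := S.exists_pair k
  have key : ∀ i, S.pNum j i k
      = ((Finset.univ.filter fun z => ((x, z) : X × X) ∈ S.r j).filter
          fun z => S.rell (z, y) = i).card := by
    intro i
    rw [← S.ncard_eq j i k (x, y) hq, Set.ncard_eq_toFinset_card']
    congr 1
    ext z
    simp only [Set.mem_toFinset, Set.mem_setOf_eq, Finset.mem_filter, Finset.mem_univ, true_and]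
    constructor
    · rintro ⟨h1, h2⟩; exact ⟨h1, S.rell_eq h2⟩
    · rintro ⟨h1, h2⟩; exact ⟨h1, h2 ▸ S.mem_rell (z, y)⟩
  have hfib := Finset.card_eq_sum_card_fiberwise
    (s := Finset.univ.filter fun z => ((x, z) : X × X) ∈ S.r j)
    (t := Finset.univ) (f := fun z => S.rell (z, y)) (fun _ _ => Finset.mem_univ _)
  rw [← S.card_out j x, hfib]
  refine Finset.sum_congr rfl fun i _ => (key i).trans ?_
  congr 1

lemma card_r_fst (i : Fin (d + 1)) :
    (S.r i).toFinset.card = Fintype.card X * S.val i := by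
  have hfib := Finset.card_eq_sum_card_fiberwise
    (s := (S.r i).toFinset) (t := Finset.univ) (f := Prod.fst)
    (fun _ _ => Finset.mem_univ _)
  rw [hfib]
  rw [Finset.sum_congr rfl (fun x _ => ?_), Finset.sum_const, smul_eq_mul, Finset.card_univ]
  rw [← S.card_out i x]
  apply Finset.card_bij (fun q _ => q.2)
  · rintro q hq
    simp only [Finset.mem_filter, Set.mem_toFinset, Finset.mem_univ, true_and] at hq ⊢
    have he : ((x, q.2) : X × X) = q := by rw [← hq.2]
    rw [he]; exact hq.1
  · rintro q hq q' hq' hz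
    simp only [Finset.mem_filter, Set.mem_toFinset] at hq hq'
    exact Prod.ext (hq.2.trans hq'.2.symm) hz
  · intro z hz
    simp only [Finset.mem_filter, Finset.mem_univ, true_and] at hz
    exact ⟨(x, z), by simp [hz], rfl⟩

lemma card_r_snd (i : Fin (d + 1)) :
    (S.r i).toFinset.card = Fintype.card X * S.val (S.star i) := by
  have hfib := Finset.card_eq_sum_card_fiberwise
    (s := (S.r i).toFinset) (t := Finset.univ) (f := Prod.snd)
    (fun _ _ => Finset.mem_univ _)
  rw [hfib]
  rw [Finset.sum_congr rfl (fun y _ => ?_), Finset.sum_const, smul_eq_mul, Finset.card_univ]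
  rw [← S.card_out (S.star i) y]
  apply Finset.card_bij (fun q _ => q.1)
  · rintro q hq
    simp only [Finset.mem_filter, Set.mem_toFinset, Finset.mem_univ, true_and] at hq ⊢
    apply S.mem_star'.mpr
    have he : ((q.1, y) : X × X) = q := by rw [← hq.2]
    rw [he]; exact hq.1
  · rintro q hq q' hq' hz
    simp only [Finset.mem_filter, Set.mem_toFinset] at hq hq'
    exact Prod.ext hz (hq.2.trans hq'.2.symm)
  · intro z hz
    simp only [Finset.mem_filter, Finset.mem_univ, true_and] at hz
    exact ⟨(z, y), by simp [S.mem_star'.mp hz], rfl⟩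

lemma val_star (i : Fin (d + 1)) : S.val (S.star i) = S.val i := by
  have h1 := S.card_r_fst i
  have h2 := S.card_r_snd i
  have hX : 0 < Fintype.card X := Fintype.card_pos
  exact Nat.eq_of_mul_eq_mul_left hX (h2.symm.trans h1)

end AssocScheme
/-- Auxiliary: the set of relations reachable from `R_0` by repeated left
complex multiplication by relations of the form `R_{s*}R_s`. -/
inductive AssocScheme.Gen {X : Type*} [Fintype X] [Nonempty X] {d : ℕ}
    (S : AssocScheme X d) : Fin (d + 1) → Prop
  | zero : AssocScheme.Gen S 0
  | step (hh z k : Fin (d + 1)) (hH : ∃ s, 0 < S.pNum (S.star s) s hh)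
      (hz : AssocScheme.Gen S z) (hk : 0 < S.pNum hh z k) : AssocScheme.Gen S k

namespace AssocScheme

variable {X : Type*} [Fintype X] [Nonempty X] {d : ℕ} (S : AssocScheme X d)

lemma gen_H {hh : Fin (d + 1)} (hH : ∃ s, 0 < S.pNum (S.star s) s hh) : S.Gen hh :=
  Gen.step hh 0 hh hH Gen.zero (S.pos_right_zero hh)

lemma gen_right {z : Fin (d + 1)} (hz : S.Gen z) :
    ∀ hh k : Fin (d + 1), (∃ s, 0 < S.pNum (S.star s) s hh) → 0 < S.pNum z hh k → S.Gen k := by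
  induction hz with
  | zero =>
    intro hh k hH hk
    have := S.eq_left_zero hk
    subst this
    exact S.gen_H hH
  | step h' z' z hH' hz' hk' ih =>
    intro hh k hH hk
    obtain ⟨n, hn1, hn2⟩ := S.assoc1 hk' hk
    exact Gen.step h' n k hH' (ih hh n hH hn1) hn2

lemma gen_star {z : Fin (d + 1)} (hz : S.Gen z) : S.Gen (S.star z) := by
  induction hz with
  | zero => rw [S.star_zero]; exact Gen.zero
  | step hh z k hH hz hk ih =>
    have h1 := S.pos_star hk
    have hH' : ∃ s, 0 < S.pNum (S.star s) s (S.star hh) := by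
      obtain ⟨s, hs⟩ := hH
      have h2 := S.pos_star hs
      rw [S.star_star] at h2
      exact ⟨s, h2⟩
    exact S.gen_right ih (S.star hh) (S.star k) hH' h1

lemma gen_mul {a : Fin (d + 1)} (ha : S.Gen a) :
    ∀ b k : Fin (d + 1), S.Gen b → 0 < S.pNum a b k → S.Gen k := by
  induction ha with
  | zero =>
    intro b k hb hk
    have := S.eq_left_zero hk
    subst this
    exact hb
  | step hh a' a hH ha' hk' ih =>
    intro b k hb hk
    obtain ⟨n, hn1, hn2⟩ := S.assoc1 hk' hk
    exact Gen.step hh n k hH (ih b n hb hn1) hn2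

lemma conj_base {hh i : Fin (d + 1)} {x cc e f : X}
    (hH : ∃ s, 0 < S.pNum (S.star s) s hh)
    (h1 : ((x, cc) : X × X) ∈ S.r (S.star i)) (h2 : ((cc, e) : X × X) ∈ S.r hh)
    (h3 : ((e, f) : X × X) ∈ S.r i) :
    S.Gen (S.rell (x, f)) := by
  obtain ⟨s, hs⟩ := hH
  obtain ⟨g, hg1, hg2⟩ := S.chain_of_pos hs h2
  have hgc : ((g, cc) : X × X) ∈ S.r s := S.mem_star'.mp hg1
  have hcx : ((cc, x) : X × X) ∈ S.r i := S.mem_star'.mp h1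
  have hw : 0 < S.pNum s i (S.rell (g, x)) := S.pos_of_chain hgc hcx (S.mem_rell _)
  have hw' : 0 < S.pNum s i (S.rell (g, f)) := S.pos_of_chain hg2 h3 (S.mem_rell _)
  have hxg : ((x, g) : X × X) ∈ S.r (S.star (S.rell (g, x))) :=
    S.mem_star'.mpr (S.mem_rell _)
  have hk : 0 < S.pNum (S.star (S.rell (g, x))) (S.rell (g, f)) (S.rell (x, f)) :=
    S.pos_of_chain hxg (S.mem_rell _) (S.mem_rell _)
  have hws : 0 < S.pNum (S.rell (g, x)) (S.star i) s := S.pos_rot2 hw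
  obtain ⟨n, hn1, hn2⟩ := S.assoc1 hws hw'
  obtain ⟨N, hN1, hN2⟩ := S.assoc2 hn2 hk
  exact S.gen_mul (S.gen_H ⟨S.rell (g, x), hN1⟩) _ _ (S.gen_H ⟨i, hn1⟩) hN2

lemma conj {t : Fin (d + 1)} (ht : S.Gen t) :
    ∀ (i : Fin (d + 1)) (x cc b y : X),
      ((x, cc) : X × X) ∈ S.r (S.star i) → ((cc, b) : X × X) ∈ S.r t →
      ((b, y) : X × X) ∈ S.r i → S.Gen (S.rell (x, y)) := by
  induction ht with
  | zero =>
    intro i x cc b y h1 h2 h3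
    have := S.eq_of_mem_zero h2
    subst this
    exact S.gen_H ⟨i, S.pos_of_chain h1 h3 (S.mem_rell _)⟩
  | step hh t' t hH ht' hk ih =>
    intro i x cc b y h1 h2 h3
    obtain ⟨e, he1, he2⟩ := S.chain_of_pos hk h2
    obtain ⟨f, hf⟩ := S.exists_out e i
    have hk1 := S.conj_base hH h1 he1 hf
    have hfe : ((f, e) : X × X) ∈ S.r (S.star i) := S.mem_star'.mpr hf
    have hk2 := ih i f e b y hfe he2 h3
    exact S.gen_mul hk1 _ _ hk2
      (S.pos_of_chain (S.mem_rell (x, f)) (S.mem_rell (f, y)) (S.mem_rell (x, y)))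

lemma gen_stronglyNormal : S.IsStronglyNormal {u | S.Gen u} := by
  constructor
  · constructor
    · exact ⟨0, Gen.zero⟩
    · rintro k ⟨a, ha, v, hv, hpos⟩
      obtain ⟨u, hu, rfl⟩ := ha
      exact S.gen_mul (S.gen_star hu) _ _ hv hpos
  · rintro i k ⟨m, hm, v, hv, hpos⟩
    obtain ⟨a, ha, t, ht, hpos'⟩ := hm
    rw [Set.mem_singleton_iff] at ha hv
    rw [ha] at hpos'
    rw [hv] at hpos
    obtain ⟨x, y, hq⟩ := S.exists_pair k
    obtain ⟨b, hb1, hb2⟩ := S.chain_of_pos hpos hq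
    obtain ⟨cc, hc1, hc2⟩ := S.chain_of_pos hpos' hb1
    have := S.conj ht i x cc b y hc1 hc2 hb2
    rwa [S.rell_eq hq] at this

lemma thinResidue_subset_gen : S.thinResidue ⊆ {u | S.Gen u} :=
  Set.sInter_subset_of_mem S.gen_stronglyNormal

end AssocScheme
namespace AssocScheme

variable {X : Type*} [Fintype X] [Nonempty X] {d : ℕ} (S : AssocScheme X d)
variable (𝔽 : Type*) [Field 𝔽]

lemma adj_apply (i : Fin (d + 1)) (x y : X) :
    S.adj 𝔽 i x y = if (x, y) ∈ S.r i then 1 else 0 := rfl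

lemma sum_smul_adj_apply (c : Fin (d + 1) → 𝔽) (x y : X) :
    (∑ i, c i • S.adj 𝔽 i) x y = c (S.rell (x, y)) := by
  rw [Matrix.sum_apply]
  rw [Finset.sum_eq_single (S.rell (x, y))]
  · rw [Matrix.smul_apply, adj_apply, if_pos (S.mem_rell (x, y)), smul_eq_mul, mul_one]
  · intro i _ hi
    rw [Matrix.smul_apply, adj_apply, if_neg, smul_eq_mul, mul_zero]
    intro hmem
    exact hi (S.rell_eq hmem).symm
  · intro hmem
    exact absurd (Finset.mem_univ _) hmem

lemma adj_mul_adj (i j : Fin (d + 1)) :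
    S.adj 𝔽 i * S.adj 𝔽 j = ∑ k, (S.pNum i j k : 𝔽) • S.adj 𝔽 k := by
  ext x y
  rw [sum_smul_adj_apply, Matrix.mul_apply]
  have hterm : ∀ z, S.adj 𝔽 i x z * S.adj 𝔽 j z y
      = if ((x, z) : X × X) ∈ S.r i ∧ ((z, y) : X × X) ∈ S.r j then 1 else 0 := by
    intro z
    rw [adj_apply, adj_apply]
    by_cases h1 : ((x, z) : X × X) ∈ S.r i <;> by_cases h2 : ((z, y) : X × X) ∈ S.r j <;>
      simp [h1, h2]
  rw [Finset.sum_congr rfl fun z _ => hterm z, Finset.sum_boole]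
  congr 1
  have := S.ncard_eq i j (S.rell (x, y)) (x, y) (S.mem_rell (x, y))
  rw [← this, Set.ncard_eq_toFinset_card']
  congr 1
  ext z
  simp

end AssocScheme
/-- Assume `p = 2` and `S` is quasi-thin. If `S = O^ϑ(S)O_ϑ(S)`, then `S` is
`2`-transitive. -/
theorem isPTransitive_of_quasiThin_eq_cmul
    {X : Type*} [Fintype X] [Nonempty X] {d : ℕ} (S : AssocScheme X d)
    (𝔽 : Type*) [Field 𝔽] [CharP 𝔽 2]
    (hqt : ∀ i : Fin (d + 1), S.val i ≤ 2)
    (h : S.cmul S.thinResidue S.thinRadical = Set.univ) :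
    S.IsPTransitive 𝔽 := by
  classical
  set v0 : Matrix X X 𝔽 := ∑ i, S.adj 𝔽 i with hv0def
  have hv0sum : v0 = ∑ i, (1 : 𝔽) • S.adj 𝔽 i := by
    rw [hv0def]
    exact Finset.sum_congr rfl fun i _ => (one_smul _ _).symm
  obtain ⟨x0⟩ := (inferInstance : Nonempty X)
  have hv0ne : v0 ≠ 0 := by
    intro h0
    have h1 : v0 x0 x0 = 1 := by
      rw [hv0sum, S.sum_smul_adj_apply 𝔽 (fun _ => (1 : 𝔽)) x0 x0]
    rw [h0] at h1
    simp at h1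
  have hv0span : v0 ∈ Submodule.span 𝔽 (Set.range (S.adj 𝔽)) := by
    rw [hv0def]
    exact Submodule.sum_mem _ fun i _ => Submodule.subset_span ⟨i, rfl⟩
  have hv0eig : ∀ j, S.adj 𝔽 j * v0 = (S.val j : 𝔽) • v0 := by
    intro j
    rw [hv0def, Finset.mul_sum, Finset.smul_sum]
    rw [Finset.sum_congr rfl fun i _ => S.adj_mul_adj 𝔽 j i]
    rw [Finset.sum_comm]
    refine Finset.sum_congr rfl fun k _ => ?_
    rw [← Finset.sum_smul]
    congr 1
    rw [← Nat.cast_sum]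
    exact congrArg _ (S.sum_pNum j k)
  have hv0triv : S.IsTrivialVector 𝔽 v0 := ⟨hv0ne, hv0span, hv0eig⟩
  refine ⟨Submodule.span 𝔽 {v0}, ⟨v0, hv0triv, rfl⟩, ?_⟩
  rintro W ⟨v, ⟨hvne, hvspan, hveig⟩, rfl⟩
  obtain ⟨c, hc⟩ := (Submodule.mem_span_range_iff_exists_fun 𝔽).mp hvspan
  -- the eigen-equations in terms of coefficients
  have hcon : ∀ j k, ∑ i, (S.pNum j i k : 𝔽) * c i = (S.val j : 𝔽) * c k := by
    intro j k
    have h1 : S.adj 𝔽 j * v = ∑ i, c i • (S.adj 𝔽 j * S.adj 𝔽 i) := by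
      rw [← hc, Finset.mul_sum]
      exact Finset.sum_congr rfl fun i _ => Matrix.mul_smul _ _ _
    have h2 : S.adj 𝔽 j * v = ∑ kk, (∑ i, (S.pNum j i kk : 𝔽) * c i) • S.adj 𝔽 kk := by
      rw [h1]
      rw [Finset.sum_congr rfl fun i _ => by rw [S.adj_mul_adj 𝔽 j i, Finset.smul_sum]]
      rw [Finset.sum_comm]
      refine Finset.sum_congr rfl fun kk _ => ?_
      have hsw : ∀ x : Fin (d + 1), c x • (S.pNum j x kk : 𝔽) • S.adj 𝔽 kk
          = ((S.pNum j x kk : 𝔽) * c x) • S.adj 𝔽 kk := by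
        intro x; rw [smul_smul, mul_comm]
      rw [Finset.sum_congr rfl fun x _ => hsw x, ← Finset.sum_smul]
    have h3 : S.adj 𝔽 j * v = ∑ kk, ((S.val j : 𝔽) * c kk) • S.adj 𝔽 kk := by
      rw [hveig j, ← hc, Finset.smul_sum]
      exact Finset.sum_congr rfl fun kk _ => smul_smul _ _ _
    obtain ⟨xx, yy, hq⟩ := S.exists_pair k
    have hxy := congrFun (congrFun (h2.symm.trans h3) xx) yy
    rw [S.sum_smul_adj_apply 𝔽 (fun kk => ∑ i, (S.pNum j i kk : 𝔽) * c i) xx yy,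
      S.sum_smul_adj_apply 𝔽 (fun kk => (S.val j : 𝔽) * c kk) xx yy,
      S.rell_eq hq] at hxy
    exact hxy
  have h2z : ((2 : ℕ) : 𝔽) = 0 := by exact_mod_cast CharP.cast_eq_zero 𝔽 2
  -- pairing: two distinct middle terms with the same left factor and target
  have pair_eq : ∀ j z z' a : Fin (d + 1),
      0 < S.pNum j z a → 0 < S.pNum j z' a → z ≠ z' → c z = c z' := by
    intro j z z' a h1 h2 hne
    have hsum := S.sum_pNum j a
    have hle : S.pNum j z a + S.pNum j z' a ≤ ∑ i, S.pNum j i a := by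
      calc S.pNum j z a + S.pNum j z' a
          = ∑ x ∈ ({z, z'} : Finset (Fin (d + 1))), S.pNum j x a := (Finset.sum_pair (f := fun x => S.pNum j x a) hne).symm
        _ ≤ ∑ i, S.pNum j i a := Finset.sum_le_sum_of_subset (Finset.subset_univ _)
    have hqtj := hqt j
    have hz1 : S.pNum j z a = 1 := by omega
    have hz2 : S.pNum j z' a = 1 := by omega
    have hval : S.val j = 2 := by omega
    have hrest : ∀ i, i ≠ z → i ≠ z' → S.pNum j i a = 0 := by
      intro i hiz hiz'
      by_contra hne0
      have hz_nm : z ∉ ({z', i} : Finset (Fin (d + 1))) := by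
        simp only [Finset.mem_insert, Finset.mem_singleton]
        push_neg
        exact ⟨hne, fun hh => hiz hh.symm⟩
      have hz'_nm : z' ∉ ({i} : Finset (Fin (d + 1))) := by
        simp only [Finset.mem_singleton]
        exact fun hh => hiz' hh.symm
      have hle3 : S.pNum j z a + S.pNum j z' a + S.pNum j i a ≤ ∑ i, S.pNum j i a := by
        have hss := Finset.sum_le_sum_of_subset
          (f := fun i => S.pNum j i a) (Finset.subset_univ ({z, z', i} : Finset (Fin (d + 1))))
        rwa [Finset.sum_insert hz_nm, Finset.sum_insert hz'_nm, Finset.sum_singleton,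
          ← add_assoc] at hss
      omega
    have hcon' := hcon j a
    have hvan : ∀ i ∈ Finset.univ, i ∉ ({z, z'} : Finset (Fin (d + 1))) →
        (S.pNum j i a : 𝔽) * c i = 0 := by
      intro i _ hi
      simp only [Finset.mem_insert, Finset.mem_singleton] at hi
      push_neg at hi
      rw [hrest i hi.1 hi.2]
      simp
    rw [← Finset.sum_subset (Finset.subset_univ _) hvan, Finset.sum_pair hne,
      hz1, hz2, hval, h2z] at hcon'
    simp only [Nat.cast_one, one_mul, zero_mul] at hcon'
    have := add_eq_zero_iff_eq_neg.mp hcon'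
    rwa [CharTwo.neg_eq] at this
  -- thin left multiplication
  have thin_step : ∀ j z k : Fin (d + 1), S.val j = 1 → 0 < S.pNum j z k → c z = c k := by
    intro j z k hval hp
    have hsum := S.sum_pNum j k
    have hle : S.pNum j z k ≤ ∑ i, S.pNum j i k :=
      Finset.single_le_sum (f := fun i => S.pNum j i k) (fun _ _ => Nat.zero_le _)
        (Finset.mem_univ z)
    have hz1 : S.pNum j z k = 1 := by omega
    have hrest : ∀ i, i ≠ z → S.pNum j i k = 0 := by
      intro i hi
      by_contra hne0
      have hle2 : S.pNum j z k + S.pNum j i k ≤ ∑ i, S.pNum j i k := by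
        calc S.pNum j z k + S.pNum j i k
            = ∑ x ∈ ({z, i} : Finset (Fin (d + 1))), S.pNum j x k :=
              (Finset.sum_pair (f := fun x => S.pNum j x k) (fun hh => hi hh.symm : z ≠ i)).symm
          _ ≤ ∑ i, S.pNum j i k := Finset.sum_le_sum_of_subset (Finset.subset_univ _)
      omega
    have hcon' := hcon j k
    have hvan : ∀ i ∈ Finset.univ, i ∉ ({z} : Finset (Fin (d + 1))) →
        (S.pNum j i k : 𝔽) * c i = 0 := by
      intro i _ hi
      rw [hrest i (by simpa using hi)]
      simp
    rw [← Finset.sum_subset (Finset.subset_univ _) hvan, Finset.sum_singleton,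
      hz1, hval] at hcon'
    simpa using hcon'
  -- propagation along Gen
  have propag : ∀ z, S.Gen z → c z = c 0 := by
    intro z hz
    induction hz with
    | zero => rfl
    | step hh z' k hH hz' hk ih =>
      obtain ⟨s, hs⟩ := hH
      obtain ⟨a, ha1, ha2⟩ := S.assoc1 hs hk
      have hra : 0 < S.pNum s k a := by
        have := S.pos_rot ha2
        rwa [S.star_star] at this
      by_cases hzk : k = z'
      · rw [hzk]; exact ih
      · exact (pair_eq s k z' a hra ha1 hzk).trans ih
  have hall : ∀ k, c k = c 0 := by
    intro k
    have hmem : S.star k ∈ S.cmul S.thinResidue S.thinRadical := by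
      rw [h]; exact Set.mem_univ _
    obtain ⟨u, hu, t, ht, hpos⟩ := hmem
    have h1 : 0 < S.pNum (S.star t) (S.star u) k := by
      have := S.pos_star hpos
      rwa [S.star_star] at this
    have hthin : S.val (S.star t) = 1 := by rw [S.val_star]; exact ht
    have e1 : c (S.star u) = c k := thin_step (S.star t) (S.star u) k hthin h1
    rw [← e1]
    exact propag _ (S.gen_star (S.thinResidue_subset_gen hu))
  have hveq : v = c 0 • v0 := by
    rw [← hc, hv0def, Finset.smul_sum]
    exact Finset.sum_congr rfl fun i _ => by rw [hall i]
  have hc0 : c 0 ≠ 0 := by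
    intro h0
    apply hvne
    rw [hveq, h0, zero_smul]
  rw [hveq]
  exact Submodule.span_singleton_smul_eq (isUnit_iff_ne_zero.mpr hc0) _
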